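/- The type-B Birkhoff polytope BB(n) = conv{M_σ : σ ∈ B_n} ⊂ ℝ^{n×n} is a reflexive polytope: its facet-defining inequalities are ⟨A, σ ⊗ e_i⟩ ≤ 1 and ⟨A, e_i ⊗ σ⟩ ≤ 1 for i = 1,...,n and σ ∈ {−1,+1}^n, where (u ⊗ v)_{jk} = u_j v_k and ⟨·,·⟩ is the Frobenius inner product. -/

import Mathlib

open Finset

/-- A sign vector. -/
def IsSignVec {n : ℕ} (σ : Fin n → ℝ) : Prop := ∀ i, σ i = 1 ∨ σ i = -1

/-- The signed permutation matrix associated to a permutation `π` and a sign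
vector `ε`: entry `(i, π i)` equals `ε i`, all other entries vanish. -/
def signedPermMatrix {n : ℕ} (π : Equiv.Perm (Fin n)) (ε : Fin n → ℝ) :
    Fin n → Fin n → ℝ :=
  fun i j => if j = π i then ε i else 0

/-- The set of signed permutation matrices (the matrices `M_σ`, `σ ∈ B_n`). -/
def signedPermMatrices (n : ℕ) : Set (Fin n → Fin n → ℝ) :=
  {M | ∃ (π : Equiv.Perm (Fin n)) (ε : Fin n → ℝ), IsSignVec ε ∧ M = signedPermMatrix π ε}

/-- The type-B (signed) Birkhoff polytope: the convex hull of all signed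
permutation matrices. -/
def BB (n : ℕ) : Set (Fin n → Fin n → ℝ) := convexHull ℝ (signedPermMatrices n)

/-- Frobenius inner product of two `n × n` matrices. -/
def dotM {n : ℕ} (A B : Fin n → Fin n → ℝ) : ℝ := ∑ i, ∑ j, A i j * B i j

/-- Rank-one tensor `(u ⊗ v)_{jk} = u_j v_k`. -/
def tensor {n : ℕ} (u v : Fin n → ℝ) : Fin n → Fin n → ℝ := fun j k => u j * v k

/-- Reflexivity for lattice polytopes in matrix space: `0` is interior and the
polytope is cut out by integral inequalities with right-hand side `1`. -/
def IsReflexiveM {n : ℕ} (P : Set (Fin n → Fin n → ℝ)) : Prop :=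
  0 ∈ interior P ∧
    ∃ A : Finset (Fin n → Fin n → ℤ),
      P = {x | ∀ a ∈ A, dotM (fun i j => ((a i j : ℤ) : ℝ)) x ≤ 1}

/-!
Both sides are the set of matrices `A` whose entrywise absolute value `|A|` is doubly
substochastic; for the facet inequalities this is `max_σ ⟨a, σ⟩ = ∑ |a_j|` over sign vectors `σ`.
Signed permutation matrices lie in this convex set. Conversely, `|A|` is the top-left block of a
doubly stochastic `2n × 2n` matrix, so by Birkhoff's theorem it is a convex combination of top-left
blocks of permutation matrices, i.e. of partial permutation matrices. Each of these is the midpoint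
of two signed permutation matrices, so `|A| ∈ BB(n)`; and `A` is obtained from `|A|` by flipping
the signs of some entries, which permutes the signed permutation matrices. Finally `0` satisfies
each of the finitely many inequalities strictly, so it is an interior point.
-/

open Matrix

section Substochastic

variable {α : Type*} [Fintype α] [DecidableEq α]

def substochasticDilation (B : Matrix α α ℝ) : Matrix (α ⊕ α) (α ⊕ α) ℝ :=
  fromBlocks B (diagonal fun i => 1 - ∑ j, B i j) (diagonal fun j => 1 - ∑ i, B i j) Bᵀ

lemma substochasticDilation_mem_doublyStochastic {B : Matrix α α ℝ} (hB : ∀ i j, 0 ≤ B i j)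
    (hrow : ∀ i, ∑ j, B i j ≤ 1) (hcol : ∀ j, ∑ i, B i j ≤ 1) :
    substochasticDilation B ∈ doublyStochastic ℝ (α ⊕ α) := by
  refine mem_doublyStochastic_iff_sum.2 ⟨?_, ?_, ?_⟩
  · rintro (i | i) (j | j) <;>
      simp only [substochasticDilation, fromBlocks_apply₁₁, fromBlocks_apply₁₂,
        fromBlocks_apply₂₁, fromBlocks_apply₂₂, diagonal_apply, transpose_apply]
    · exact hB i j
    · split_ifs <;> linarith [hrow i]
    · split_ifs <;> linarith [hcol i]
    · exact hB j i
  · rintro (i | i) <;> simp [substochasticDilation, Fintype.sum_sum_type, diagonal_apply]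
  · rintro (j | j) <;> simp [substochasticDilation, Fintype.sum_sum_type, diagonal_apply]

lemma mem_convexHull_permMatrix_inl_inl {B : α → α → ℝ} (hB : ∀ i j, 0 ≤ B i j)
    (hrow : ∀ i, ∑ j, B i j ≤ 1) (hcol : ∀ j, ∑ i, B i j ≤ 1) :
    B ∈ convexHull ℝ (Set.range fun (τ : Equiv.Perm (α ⊕ α)) (i j : α) =>
      τ.permMatrix ℝ (.inl i) (.inl j)) := by
  let blockₗ : Matrix (α ⊕ α) (α ⊕ α) ℝ →ₗ[ℝ] α → α → ℝ :=
    { toFun := fun M i j => M (.inl i) (.inl j)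
      map_add' := fun _ _ => rfl
      map_smul' := fun _ _ => rfl }
  have hD := substochasticDilation_mem_doublyStochastic hB hrow hcol
  rw [← SetLike.mem_coe, doublyStochastic_eq_convexHull_permMatrix] at hD
  have := Set.mem_image_of_mem blockₗ hD
  rw [blockₗ.image_convexHull] at this
  convert this using 2
  · exact Set.range_comp blockₗ (fun τ : Equiv.Perm (α ⊕ α) => τ.permMatrix ℝ)
  · rfl

end Substochastic

lemma mem_interior_setOf_forall_le {X ι : Type*} [TopologicalSpace X] (s : Finset ι)
    {f : ι → X → ℝ} (hf : ∀ i ∈ s, Continuous (f i)) {c : ℝ} {x : X}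
    (hx : ∀ i ∈ s, f i x < c) : x ∈ interior {y | ∀ i ∈ s, f i y ≤ c} :=
  mem_interior_iff_mem_nhds.2 <| (Filter.eventually_all_finset s).2 fun i hi =>
    ((hf i hi).continuousAt.eventually (gt_mem_nhds (hx i hi))).mono fun _ => le_of_lt

section SignedBirkhoff

variable {n : ℕ}

lemma mul_signedPermMatrix (S : Fin n → Fin n → ℝ) (π : Equiv.Perm (Fin n)) (ε : Fin n → ℝ) :
    S * signedPermMatrix π ε = signedPermMatrix π fun i => S i (π i) * ε i := by
  funext i j
  simp only [Pi.mul_apply, signedPermMatrix]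
  split_ifs with h <;> simp [h]

-- `*` is the entrywise product on `Fin n → Fin n → ℝ`, so `S * A` flips the signs of some entries.
lemma mul_mem_BB {S A : Fin n → Fin n → ℝ} (hS : ∀ i, IsSignVec (S i)) (hA : A ∈ BB n) :
    S * A ∈ BB n := by
  have hsub : LinearMap.mulLeft ℝ S '' signedPermMatrices n ⊆ signedPermMatrices n := by
    rintro _ ⟨_, ⟨π, ε, hε, rfl⟩, rfl⟩
    refine ⟨π, _, fun i => ?_, mul_signedPermMatrix S π ε⟩
    rcases hS i (π i) with h | h <;> rcases hε i with h' | h' <;> simp [h, h']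
  have := Set.mem_image_of_mem (LinearMap.mulLeft ℝ S) hA
  rw [BB, LinearMap.image_convexHull] at this
  exact convexHull_mono hsub this

lemma signedPermMatrix_mem_BB (π : Equiv.Perm (Fin n)) {ε : Fin n → ℝ} (hε : IsSignVec ε) :
    signedPermMatrix π ε ∈ BB n :=
  subset_convexHull ℝ _ ⟨π, ε, hε, rfl⟩

lemma signedPermMatrix_indicator_one_mem_BB (π : Equiv.Perm (Fin n)) (s : Set (Fin n)) :
    signedPermMatrix π (s.indicator 1) ∈ BB n := by
  classical
  let ε : Fin n → ℝ := fun i => if i ∈ s then 1 else -1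
  have hmid : signedPermMatrix π (s.indicator 1) =
      (1 / 2 : ℝ) • signedPermMatrix π 1 + (1 / 2 : ℝ) • signedPermMatrix π ε := by
    funext i j
    simp only [signedPermMatrix, Set.indicator_apply, Pi.add_apply, Pi.smul_apply, ε]
    split_ifs <;> norm_num
  rw [hmid]
  refine convex_convexHull ℝ _ (signedPermMatrix_mem_BB π fun _ => Or.inl rfl)
    (signedPermMatrix_mem_BB π fun i => ?_) (by norm_num) (by norm_num) (by norm_num)
  by_cases h : i ∈ s <;> simp [ε, h]

lemma exists_permMatrix_inl_inl_eq (τ : Equiv.Perm (Fin n ⊕ Fin n)) :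
    ∃ (π : Equiv.Perm (Fin n)) (s : Set (Fin n)),
      (fun i j => τ.permMatrix ℝ (.inl i) (.inl j)) = signedPermMatrix π (s.indicator 1) := by
  classical
  let s : Set (Fin n) := {i | (τ (.inl i)).isLeft}
  let f : Fin n → Fin n := fun i => (τ (.inl i)).elim id fun _ => i
  have hf : ∀ i ∈ s, τ (.inl i) = .inl (f i) := by
    intro i hi
    rcases h : τ (.inl i) with j | j <;> simp_all [s, f]
  have hinj : Set.InjOn f s := fun i hi i' hi' h =>
    Sum.inl_injective (τ.injective (by rw [hf i hi, hf i' hi', h]))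
  obtain ⟨g, hg⟩ := Set.MapsTo.exists_equiv_extend_of_card_eq (t := univ) (by simp)
    (fun _ _ => by simp) hinj
  refine ⟨g.trans (Equiv.subtypeUnivEquiv mem_univ), s, ?_⟩
  funext i j
  simp only [Equiv.Perm.permMatrix, PEquiv.toMatrix_apply,
    Equiv.toPEquiv_apply, Option.mem_def, Option.some.injEq, signedPermMatrix, Set.indicator_apply]
  by_cases hi : i ∈ s
  · simp [hf i hi, hi, hg i hi, eq_comm]
  · have : τ (.inl i) ≠ .inl j := fun h => hi (by simp [s, h])
    simp [this, hi]

lemma permMatrix_inl_inl_mem_BB (τ : Equiv.Perm (Fin n ⊕ Fin n)) :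
    (fun i j => τ.permMatrix ℝ (.inl i) (.inl j)) ∈ BB n := by
  obtain ⟨π, s, h⟩ := exists_permMatrix_inl_inl_eq τ
  exact h ▸ signedPermMatrix_indicator_one_mem_BB π s

lemma mem_BB_of_substochastic {B : Fin n → Fin n → ℝ} (hB : ∀ i j, 0 ≤ B i j)
    (hrow : ∀ i, ∑ j, B i j ≤ 1) (hcol : ∀ j, ∑ i, B i j ≤ 1) : B ∈ BB n :=
  convexHull_min (Set.range_subset_iff.2 permMatrix_inl_inl_mem_BB) (convex_convexHull ℝ _)
    (mem_convexHull_permMatrix_inl_inl hB hrow hcol)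

def absSubstochastic (n : ℕ) : Set (Fin n → Fin n → ℝ) :=
  {A | (∀ i, ∑ j, |A i j| ≤ 1) ∧ ∀ j, ∑ i, |A i j| ≤ 1}

lemma isSignVec_ite_nonneg (a : Fin n → ℝ) : IsSignVec fun j => if 0 ≤ a j then 1 else -1 :=
  fun j => by dsimp only; split_ifs <;> simp

lemma mul_ite_nonneg_eq_abs (a : ℝ) : a * (if 0 ≤ a then 1 else -1) = |a| := by
  split_ifs with h
  · rw [mul_one, abs_of_nonneg h]
  · rw [mul_neg_one, abs_of_neg (not_le.1 h)]

lemma absSubstochastic_subset_BB : absSubstochastic n ⊆ BB n := by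
  rintro A ⟨hrow, hcol⟩
  let S : Fin n → Fin n → ℝ := fun i j => if 0 ≤ A i j then 1 else -1
  have hA : A = S * fun i j => |A i j| := by
    funext i j
    rw [Pi.mul_apply, Pi.mul_apply, ← mul_ite_nonneg_eq_abs, mul_left_comm, ← mul_assoc]
    split_ifs <;> simp [S, *]
  rw [hA]
  exact mul_mem_BB (fun i => isSignVec_ite_nonneg (A i))
    (mem_BB_of_substochastic (fun i j => abs_nonneg _) hrow hcol)

lemma forall_isSignVec_sum_mul_le_iff (a : Fin n → ℝ) (c : ℝ) :
    (∀ σ, IsSignVec σ → ∑ j, a j * σ j ≤ c) ↔ ∑ j, |a j| ≤ c := by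
  refine ⟨fun h => ?_, fun h σ hσ => le_trans (sum_le_sum fun j _ => ?_) h⟩
  · simpa only [mul_ite_nonneg_eq_abs] using h _ (isSignVec_ite_nonneg a)
  · rcases hσ j with h | h <;> simp [h, le_abs_self, neg_le_abs]

lemma dotM_tensor_single_right (A : Fin n → Fin n → ℝ) (σ : Fin n → ℝ) (i : Fin n) :
    dotM A (tensor σ (Pi.single i 1)) = ∑ j, A j i * σ j := by
  simp [dotM, tensor, Pi.single_apply]

lemma dotM_tensor_single_left (A : Fin n → Fin n → ℝ) (σ : Fin n → ℝ) (i : Fin n) :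
    dotM A (tensor (Pi.single i 1) σ) = ∑ k, A i k * σ k := by
  simp [dotM, tensor, Pi.single_apply]

lemma dotM_smul_add_smul (A B T : Fin n → Fin n → ℝ) (a b : ℝ) :
    dotM (a • A + b • B) T = a * dotM A T + b * dotM B T := by
  simp only [dotM, Pi.add_apply, Pi.smul_apply, smul_eq_mul, mul_sum, ← sum_add_distrib]
  exact sum_congr rfl fun _ _ => sum_congr rfl fun _ _ => by ring

def signFacetPolyhedron (n : ℕ) : Set (Fin n → Fin n → ℝ) :=
  {A | ∀ i : Fin n, ∀ σ : Fin n → ℝ, IsSignVec σ →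
    dotM A (tensor σ (Pi.single i 1)) ≤ 1 ∧ dotM A (tensor (Pi.single i 1) σ) ≤ 1}

lemma signFacetPolyhedron_eq_absSubstochastic : signFacetPolyhedron n = absSubstochastic n := by
  ext A
  simp only [signFacetPolyhedron, absSubstochastic, Set.mem_ofPred_eq, dotM_tensor_single_right,
    dotM_tensor_single_left, imp_and, forall_and, forall_isSignVec_sum_mul_le_iff]
  exact and_comm

lemma convex_absSubstochastic : Convex ℝ (absSubstochastic n) := by
  rw [← signFacetPolyhedron_eq_absSubstochastic]
  intro A hA B hB a b ha hb hab i σ hσ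
  have hcomb : ∀ T, dotM A T ≤ 1 → dotM B T ≤ 1 → dotM (a • A + b • B) T ≤ 1 := by
    intro T hAT hBT
    rw [dotM_smul_add_smul]
    nlinarith
  exact ⟨hcomb _ (hA i σ hσ).1 (hB i σ hσ).1, hcomb _ (hA i σ hσ).2 (hB i σ hσ).2⟩

lemma signedPermMatrix_mem_absSubstochastic (π : Equiv.Perm (Fin n)) {ε : Fin n → ℝ}
    (hε : IsSignVec ε) : signedPermMatrix π ε ∈ absSubstochastic n := by
  have habs : ∀ i j, |signedPermMatrix π ε i j| = if π i = j then 1 else 0 := by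
    intro i j
    rcases hε i with h | h <;> simp [signedPermMatrix, h, apply_ite, eq_comm]
  exact ⟨fun i => by simp [habs], fun j => by simp [habs, ← Equiv.eq_symm_apply]⟩

lemma BB_subset_absSubstochastic : BB n ⊆ absSubstochastic n :=
  convexHull_min (by rintro _ ⟨π, ε, hε, rfl⟩; exact signedPermMatrix_mem_absSubstochastic π hε)
    convex_absSubstochastic

lemma isSignVec_iff_exists_units {σ : Fin n → ℝ} :
    IsSignVec σ ↔ ∃ u : Fin n → ℤˣ, σ = fun j => ((u j : ℤ) : ℝ) := by
  constructor
  · intro hσ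
    have : ∀ j, ∃ v : ℤˣ, ((v : ℤ) : ℝ) = σ j := fun j =>
      (hσ j).elim (fun h => ⟨1, by simp [h]⟩) fun h => ⟨-1, by simp [h]⟩
    choose u hu using this
    exact ⟨u, funext fun j => (hu j).symm⟩
  · rintro ⟨u, rfl⟩ j
    rcases Int.units_eq_one_or (u j) with h | h <;> simp [h]

-- The sign vectors are parametrized by `Fin n → ℤˣ`, since `ℤˣ = {1, -1}`.
def signFacetNormals (n : ℕ) : Finset (Fin n → Fin n → ℤ) :=
  (univ.image fun p : Fin n × (Fin n → ℤˣ) =>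
      fun j k => (p.2 j : ℤ) * (Pi.single p.1 1 : Fin n → ℤ) k) ∪
    univ.image fun p : Fin n × (Fin n → ℤˣ) =>
      fun j k => (Pi.single p.1 1 : Fin n → ℤ) j * (p.2 k : ℤ)

lemma dotM_comm (A B : Fin n → Fin n → ℝ) : dotM A B = dotM B A := by
  simp only [dotM, mul_comm]

lemma intCast_mul_eq_tensor (u v : Fin n → ℤ) :
    (fun j k => ((u j * v k : ℤ) : ℝ)) = tensor (fun j => (u j : ℝ)) fun k => (v k : ℝ) := by
  ext j k
  simp [tensor]

lemma intCast_single (i : Fin n) :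
    (fun k => (((Pi.single i 1 : Fin n → ℤ) k : ℤ) : ℝ)) = Pi.single i 1 := by
  ext k
  simp [Pi.single_apply]

lemma setOf_signFacetNormals :
    {x | ∀ a ∈ signFacetNormals n, dotM (fun i j => ((a i j : ℤ) : ℝ)) x ≤ 1} =
      signFacetPolyhedron n := by
  ext x
  simp only [signFacetNormals, signFacetPolyhedron, Set.mem_ofPred_eq, mem_union, mem_image,
    mem_univ, true_and]
  constructor
  · intro h i σ hσ
    obtain ⟨u, rfl⟩ := isSignVec_iff_exists_units.1 hσ
    have h1 := h _ (Or.inl ⟨(i, u), rfl⟩)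
    have h2 := h _ (Or.inr ⟨(i, u), rfl⟩)
    rw [intCast_mul_eq_tensor, intCast_single, dotM_comm] at h1 h2
    exact ⟨h1, h2⟩
  · rintro h _ (⟨⟨i, u⟩, rfl⟩ | ⟨⟨i, u⟩, rfl⟩) <;>
      rw [intCast_mul_eq_tensor, intCast_single, dotM_comm]
    · exact (h i _ (isSignVec_iff_exists_units.2 ⟨u, rfl⟩)).1
    · exact (h i _ (isSignVec_iff_exists_units.2 ⟨u, rfl⟩)).2

end SignedBirkhoff

/-- the type-B Birkhoff polytope is reflexive, with
facet-defining inequalities `⟨A, σ ⊗ e_i⟩ ≤ 1` and `⟨A, e_i ⊗ σ⟩ ≤ 1` for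
`i ∈ [n]` and sign vectors `σ`. -/
theorem stmt17 (n : ℕ) :
    IsReflexiveM (BB n) ∧
      BB n = {A | ∀ i : Fin n, ∀ σ : Fin n → ℝ, IsSignVec σ →
        dotM A (tensor σ (Pi.single i 1)) ≤ 1 ∧
        dotM A (tensor (Pi.single i 1) σ) ≤ 1} := by
  have hfacets : BB n = signFacetPolyhedron n := by
    rw [signFacetPolyhedron_eq_absSubstochastic]
    exact BB_subset_absSubstochastic.antisymm absSubstochastic_subset_BB
  have hnormals := hfacets.trans setOf_signFacetNormals.symm
  refine ⟨⟨?_, signFacetNormals n, hnormals⟩, hfacets⟩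
  rw [hnormals]
  exact mem_interior_setOf_forall_le _ (fun a _ => by unfold dotM; fun_prop)
    fun _ _ => by simp [dotM]
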